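/- arXiv:2508.13868 — 5 statements merged into one kernel-verified Lean document; each statement's English description precedes it below -/
import Mathlib

section
/- For all natural numbers k, l1, l2, l3 with l1 + l2 + l3 < k, the following inequality holds in the integers: k · 2^{k+1} ≤ 2^{l1+l2+l3} · ( (k − l3) · 2^{k+1−l2} − l1 · C(k+1−l2, ⌊(k+1−l2)/2⌋) ). -/
/-- Since `2 ^ m ≥ m + 1`, we get `(k - m) * 2 ^ m ≥ (k - m) * (m + 1) = k + m * (k - m - 1)`. -/
lemma le_sub_mul_two_pow {k m : ℕ} (h : m < k) : (k : ℤ) ≤ (k - m) * 2 ^ m := by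
  have hpow : (m : ℤ) + 1 ≤ 2 ^ m := by exact_mod_cast Nat.lt_two_pow_self
  have hkm : (0 : ℤ) ≤ k - m - 1 := by omega
  calc (k : ℤ) ≤ k + m * (k - m - 1) := le_add_of_nonneg_right (by positivity)
    _ = (k - m) * (m + 1) := by ring
    _ ≤ (k - m) * 2 ^ m := by gcongr; omega

theorem case_d_summand_nondecrease (k l1 l2 l3 : ℕ) (h : l1 + l2 + l3 < k) :
    (k : ℤ) * 2 ^ (k + 1) ≤
      2 ^ (l1 + l2 + l3) *
        (((k : ℤ) - l3) * 2 ^ (k + 1 - l2) -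
          (l1 : ℤ) * (Nat.choose (k + 1 - l2) ((k + 1 - l2) / 2) : ℤ)) := by
  have hpow : (2 : ℤ) ^ (l1 + l2 + l3) * 2 ^ (k + 1 - l2) = 2 ^ (l1 + l3) * 2 ^ (k + 1) := by
    rw [← pow_add, ← pow_add]; congr 1; omega
  have hchoose : (Nat.choose (k + 1 - l2) ((k + 1 - l2) / 2) : ℤ) ≤ 2 ^ (k + 1 - l2) := by
    exact_mod_cast Nat.choose_le_two_pow _ _
  calc (k : ℤ) * 2 ^ (k + 1) ≤ (k - ↑(l1 + l3)) * 2 ^ (l1 + l3) * 2 ^ (k + 1) := by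
        gcongr; exact le_sub_mul_two_pow (by omega)
    _ = 2 ^ (l1 + l2 + l3) * ((k - l3) * 2 ^ (k + 1 - l2) - l1 * 2 ^ (k + 1 - l2)) := by
        push_cast; linear_combination (↑k - ↑l1 - ↑l3 : ℤ) * hpow.symm
    _ ≤ _ := by gcongr
end

section
/- For all natural numbers k, l1, l2, l3, l' with k ≥ 4, 1 ≤ l1 + l2 + l3 + l' ≤ k, l' ≤ k − 1, and l1 ≤ k − l', the following strict inequality holds in the integers: k · 2^{k+1} · (2^{k+1} − 2) < 2^{l1+l2+l3+l'} · ( (k − l') · 2^{k+1−l2} · (2^{k+1−l3} − 1) − l1 · C(k+1−l2, ⌊(k+1−l2)/2⌋) · C(k+1−l3, ⌈(k+1−l3)/2⌉) ) + (2^{l1+l3+l'} − 1) · k · 2^{k+1}. -/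
/-!
Write `Q = 2^(k+1)`, `P = 2^(l1+l')`, and `y = 2^l2`, `z = 2^l3`, so that `2^(k+1-l2) = Q / y` and
`2^(k+1-l3) = Q / z`. Each binomial coefficient of `n ≥ 1` is at most `2^n / 2`, so the subtracted
product is at most `l1 Q² / 4`, and the right-hand side is at least
`(P / 4) (4 (k - l') - l1) Q² + l' P z Q - k Q`. The first summand dominates `k Q²` because
`2^(l1+l') ≥ (l1 + 1)(l' + 1)` outgrows the loss `4 l' + l1`; the remaining `-k Q` is strictly
larger than the `-2 k Q` on the left.
-/

theorem Nat.two_mul_choose_le_two_pow {n : ℕ} (hn : n ≠ 0) (i : ℕ) : 2 * n.choose i ≤ 2 ^ n := by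
  obtain ⟨m, rfl⟩ := Nat.exists_eq_add_one_of_ne_zero hn
  rw [pow_succ']
  exact Nat.mul_le_mul_left 2 (Nat.choose_succ_le_two_pow m i)

theorem four_mul_le_two_pow_mul_sub {k l₁ l' : ℕ} (hl₁ : l₁ + l' ≤ k) (hl' : l' < k) :
    4 * (k : ℤ) ≤ 2 ^ (l₁ + l') * (4 * (k - l') - l₁) := by
  obtain ⟨m, rfl⟩ : ∃ m, k = m + l' := ⟨k - l', by omega⟩
  have hx : (l₁ + 1 : ℤ) ≤ 2 ^ l₁ := by exact_mod_cast Nat.lt_two_pow_self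
  have hw : (l' + 1 : ℤ) ≤ 2 ^ l' := by exact_mod_cast Nat.lt_two_pow_self
  have hm : (1 : ℤ) ≤ m := by exact_mod_cast (by omega : 1 ≤ m)
  have hl₁m : (l₁ : ℤ) ≤ m := by exact_mod_cast (by omega : l₁ ≤ m)
  have hpos : (0 : ℤ) ≤ 4 * m - l₁ := by linarith
  push_cast
  calc 4 * ((m : ℤ) + l') ≤ (l' + 1) * (4 * m) := by nlinarith
    _ ≤ (l' + 1) * ((l₁ + 1) * (4 * m - l₁)) :=
        mul_le_mul_of_nonneg_left (by nlinarith) (by positivity)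
    _ ≤ 2 ^ l' * (2 ^ l₁ * (4 * m - l₁)) := by gcongr
    _ = 2 ^ (l₁ + l') * (4 * (m + l' - l') - l₁) := by ring

/-- In the application `K = k`, `Q = 2^(k+1)`, `P = 2^(l1+l')`, `y = 2^l2`, `z = 2^l3`,
`u = 2^(k+1-l2)`, `v = 2^(k+1-l3)`, and `a`, `b` are the two binomial coefficients. -/
theorem case_3_summand_lt_of_bounds {K L₁ L' Q P y z u v a b : ℤ} (hK : 0 < K) (hQ : 0 < Q)
    (hP : 0 ≤ P) (hy : 0 ≤ y) (hz : 0 ≤ z) (hL₁ : 0 ≤ L₁) (hL' : 0 ≤ L') (hb : 0 ≤ b)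
    (hyu : y * u = Q) (hzv : z * v = Q) (hau : 2 * a ≤ u) (hbv : 2 * b ≤ v)
    (hP4 : 4 * K ≤ P * (4 * (K - L') - L₁)) :
    K * Q * (Q - 2) <
      P * y * z * ((K - L') * u * (v - 1) - L₁ * a * b) + (P * z - 1) * K * Q := by
  have hab : 4 * (y * a) * (z * b) ≤ Q * Q := by
    have h := mul_le_mul (a := 2 * (y * a)) (b := Q) (c := 2 * (z * b)) (d := Q)
      (by rw [← hyu]; nlinarith) (by rw [← hzv]; nlinarith) (by positivity) hQ.le
    linarith
  have hlead : K * Q ^ 2 ≤ P * (K - L') * Q ^ 2 - P * L₁ * (y * a) * (z * b) := by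
    nlinarith [mul_le_mul_of_nonneg_left hab (mul_nonneg hP hL₁),
      mul_le_mul_of_nonneg_right hP4 (sq_nonneg Q)]
  have hrest : 0 ≤ P * z * L' * Q := by positivity
  linear_combination hlead + hrest + K * hQ - P * (K - L') * (z * v - z) * hyu -
    P * (K - L') * Q * hzv

theorem case_3_combined_increase_general (k l1 l2 l3 l' : ℕ)
    (hge : 1 ≤ l1 + l2 + l3 + l') (hle : l1 + l2 + l3 + l' ≤ k)
    (hl' : l' ≤ k - 1) :
    (k : ℤ) * 2 ^ (k + 1) * (2 ^ (k + 1) - 2) <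
      2 ^ (l1 + l2 + l3 + l') *
        (((k : ℤ) - l') * 2 ^ (k + 1 - l2) * (2 ^ (k + 1 - l3) - 1) -
          (l1 : ℤ) * (Nat.choose (k + 1 - l2) ((k + 1 - l2) / 2) : ℤ) *
            (Nat.choose (k + 1 - l3) ((k + 1 - l3 + 1) / 2) : ℤ)) +
      (2 ^ (l1 + l3 + l') - 1) * (k : ℤ) * 2 ^ (k + 1) := by
  have two_pow_mul_two_pow_sub {l : ℕ} (hl : l ≤ k) :
      (2 : ℤ) ^ l * 2 ^ (k + 1 - l) = 2 ^ (k + 1) := by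
    rw [← pow_add, Nat.add_sub_cancel' (by omega)]
  have two_mul_choose_le {l : ℕ} (hl : l ≤ k) (i : ℕ) :
      2 * ((k + 1 - l).choose i : ℤ) ≤ 2 ^ (k + 1 - l) := by
    exact_mod_cast Nat.two_mul_choose_le_two_pow (by omega) i
  rw [show (2 : ℤ) ^ (l1 + l2 + l3 + l') = 2 ^ (l1 + l') * 2 ^ l2 * 2 ^ l3 by ring,
    show (2 : ℤ) ^ (l1 + l3 + l') = 2 ^ (l1 + l') * 2 ^ l3 by ring]
  exact case_3_summand_lt_of_bounds (Nat.cast_pos.mpr (by omega)) (by positivity) (by positivity)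
    (by positivity) (by positivity) (by positivity) (by positivity) (by positivity)
    (two_pow_mul_two_pow_sub (by omega)) (two_pow_mul_two_pow_sub (by omega))
    (two_mul_choose_le (by omega) _) (two_mul_choose_le (by omega) _)
    (four_mul_le_two_pow_mul_sub (by omega) (by omega))

theorem case_3_combined_increase (k l1 l2 l3 l' : ℕ) (hk : 4 ≤ k)
    (hge : 1 ≤ l1 + l2 + l3 + l') (hle : l1 + l2 + l3 + l' ≤ k)
    (hl' : l' ≤ k - 1) (hl1 : l1 ≤ k - l') :
    (k : ℤ) * 2 ^ (k + 1) * (2 ^ (k + 1) - 2) <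
      2 ^ (l1 + l2 + l3 + l') *
        (((k : ℤ) - l') * 2 ^ (k + 1 - l2) * (2 ^ (k + 1 - l3) - 1) -
          (l1 : ℤ) * (Nat.choose (k + 1 - l2) ((k + 1 - l2) / 2) : ℤ) *
            (Nat.choose (k + 1 - l3) ((k + 1 - l3 + 1) / 2) : ℤ)) +
      (2 ^ (l1 + l3 + l') - 1) * (k : ℤ) * 2 ^ (k + 1) :=
  case_3_combined_increase_general k l1 l2 l3 l' hge hle hl'
end

section
/- For all natural numbers n, k, ξ, ζ with 1 ≤ k and k < n: 2^k · ( 2·k·(2^k − 1)·ζ + 2·k·ξ + k·2^n ) ≤ 2·k·2^k·ξ + k·2^n·(2^{k+1} − 1) if and only if ζ ≤ 2^{n−k−1}. -/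
theorem nonincrease_PBI_iff_minority (n k ξ ζ : ℕ) (hk : 1 ≤ k) (hkn : k < n) :
    2 ^ k * (2 * k * (2 ^ k - 1) * ζ + 2 * k * ξ + k * 2 ^ n) ≤
        2 * k * 2 ^ k * ξ + k * 2 ^ n * (2 ^ (k + 1) - 1) ↔
      ζ ≤ 2 ^ (n - k - 1) := by
  obtain ⟨m, rfl⟩ : ∃ m, n = m + k + 1 := ⟨n - k - 1, by omega⟩
  have hm : m + k + 1 - k - 1 = m := by omega
  rw [hm]
  have hn : (2:ℕ)^(m+k+1) = 2^m * (2 * 2^k) := by ring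
  have hk1 : (2:ℕ)^(k+1) = 2 * 2^k := by ring
  rw [hn, hk1]
  have hp : 1 ≤ 2^k := Nat.one_le_two_pow
  have h2p : 1 ≤ 2 * 2^k := by omega
  zify [hp, h2p]
  have hpz : (2:ℤ) ≤ 2^k := by exact_mod_cast Nat.one_lt_two_pow_iff.mpr (by omega)
  have hqz : (1:ℤ) ≤ 2^m := by exact_mod_cast Nat.one_le_two_pow (n := m)
  have hkz : (1:ℤ) ≤ (k:ℤ) := by exact_mod_cast hk
  constructor <;> intro h
  · nlinarith [h, mul_nonneg (sub_nonneg.mpr hqz) (sub_nonneg.mpr hpz),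
      mul_pos (mul_pos (by linarith : (0:ℤ) < k) (by linarith : (0:ℤ) < 2^k)) (by linarith : (0:ℤ) < 2^k - 1)]
  · nlinarith [h, mul_pos (by linarith : (0:ℤ) < k) (by linarith : (0:ℤ) < 2^k),
      mul_nonneg (mul_nonneg (by linarith : (0:ℤ) ≤ (k:ℤ)) (by linarith : (0:ℤ) ≤ (2:ℤ)^k)) (by linarith : (0:ℤ) ≤ 2^k - 1)]
end

section
/- Let n ≥ 2 and m ≥ 1 be natural numbers, let pos, neg : Fin m → Finset (Fin n) satisfy pos j ∩ neg j = ∅ for every j, set r' = ⌈log₂ n⌉, and let t ≥ 1 be a natural number with 10^t > 2^{r'+1}. Index weights by ι = (Fin n ⊕ Fin n) ⊕ (Fin m × Fin r') and define w : ι → ℕ by: a_i = w(inl(inl i)) = 10^{t(m+1)+(i+1)} + Σ_{j : i ∈ pos j} 10^{t(j+1)}; b_i = w(inl(inr i)) = 10^{t(m+1)+(i+1)} + Σ_{j : i ∈ neg j} 10^{t(j+1)}; and w(inr(j,s)) = 2^s · 10^{t(j+1)}. Define q' = Σ_{i ∈ Fin n} 10^{t(m+1)+(i+1)} + 2^{r'}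 · Σ_{j ∈ Fin m} 10^{t(j+1)}. Then the number of finite sets S ⊆ ι with Σ_{x ∈ S} w(x) = q' equals the number of assignments α : Fin n → Bool such that for every j ∈ Fin m there is some i ∈ pos j with α i = true or some i ∈ neg j with α i = false. -/
/-!
Read every weight in base 10: variable `i` owns the digit at position `t(m+1)+i+1` and clause `j`
owns the block of `t` digits starting at position `t(j+1)`. A set `S` of items puts into the digit
of variable `i` the number of `a_i, b_i` it contains, and into the block of clause `j` the number
of literals of clause `j` it selects plus `∑_{c_{j,s} ∈ S} 2^s`. Disjointness of `pos j` and
`neg j` bounds this by `n + 2^{r'} - 1 < 2^{r'+1} < 10^t`, so nothing carries and `S` sums to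
`q'` iff it contains exactly one of `a_i, b_i` for every `i` (this is an assignment `α`) and for
every clause `j` the chosen `c_{j,s}` spell out `2^{r'} - k_j` in binary, `k_j` being the number
of literals of clause `j` true under `α`. As `k_j ≤ n ≤ 2^{r'}`, such a binary expansion exists
iff `k_j ≥ 1`, i.e. iff `α` satisfies clause `j`, and it is unique.
-/

open Finset

lemma card_add_card_le_card_univ {α : Type*} [Fintype α] {s t : Finset α} (h : Disjoint s t) :
    #s + #t ≤ Fintype.card α :=
  (card_disjUnion s t h).symm.trans_le (card_le_univ _)

lemma sum_mul_pow_lt {b k : ℕ} {d : Fin k → ℕ} (hd : ∀ i, d i < b) :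
    ∑ i, d i * b ^ (i : ℕ) < b ^ k := by
  simpa [finFunctionFinEquiv_apply] using (finFunctionFinEquiv fun i ↦ (⟨d i, hd i⟩ : Fin b)).isLt

lemma sum_mul_pow_injective {b k : ℕ} {d e : Fin k → ℕ} (hd : ∀ i, d i < b) (he : ∀ i, e i < b)
    (h : ∑ i, d i * b ^ (i : ℕ) = ∑ i, e i * b ^ (i : ℕ)) : d = e := by
  have := (@finFunctionFinEquiv b k).injective (a₁ := fun i ↦ ⟨d i, hd i⟩)
    (a₂ := fun i ↦ ⟨e i, he i⟩) (Fin.ext (by simpa [finFunctionFinEquiv_apply] using h))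
  exact funext fun i ↦ congrArg (fun f ↦ (f i : ℕ)) this

lemma eq_and_eq_of_add_mul_eq {a a' b b' c : ℕ} (ha : a < c) (ha' : a' < c)
    (h : a + c * b = a' + c * b') : a = a' ∧ b = b' := by
  have hc : 0 < c := by omega
  refine ⟨?_, ?_⟩
  · simpa [Nat.add_mul_mod_self_left, Nat.mod_eq_of_lt ha, Nat.mod_eq_of_lt ha'] using
      congrArg (· % c) h
  · simpa [Nat.add_mul_div_left _ _ hc, Nat.div_eq_of_lt ha, Nat.div_eq_of_lt ha'] using
      congrArg (· / c) h

lemma sum_two_pow_eq_sum_map_val {r : ℕ} (T : Finset (Fin r)) :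
    ∑ s ∈ T, 2 ^ (s : ℕ) = ∑ k ∈ T.map Fin.valEmbedding, 2 ^ k :=
  (sum_map T Fin.valEmbedding (2 ^ ·)).symm

lemma sum_two_pow_lt {r : ℕ} (T : Finset (Fin r)) : ∑ s ∈ T, 2 ^ (s : ℕ) < 2 ^ r := by
  rw [sum_two_pow_eq_sum_map_val]
  exact Nat.geomSum_lt le_rfl (by simp)

lemma sum_two_pow_injective {r : ℕ} :
    Function.Injective fun T : Finset (Fin r) ↦ ∑ s ∈ T, 2 ^ (s : ℕ) := by
  intro T T' h
  simp only [sum_two_pow_eq_sum_map_val] at h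
  exact map_injective _ (geomSum_injective le_rfl h)

lemma exists_sum_two_pow_eq {r v : ℕ} (hv : v < 2 ^ r) :
    ∃ T : Finset (Fin r), ∑ s ∈ T, 2 ^ (s : ℕ) = v := by
  have hbij := (Fintype.bijective_iff_injective_and_card
    fun T : Finset (Fin r) ↦ (⟨_, sum_two_pow_lt T⟩ : Fin (2 ^ r))).2
    ⟨fun T T' h ↦ sum_two_pow_injective (congrArg Fin.val h), by simp⟩
  obtain ⟨T, hT⟩ := hbij.2 ⟨v, hv⟩
  exact ⟨T, congrArg Fin.val hT⟩

namespace SubsetSumReduction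

lemma eq_of_sum_digits_eq {n m t : ℕ} {u u' : Fin n → ℕ} {C C' : Fin m → ℕ}
    (hu : ∀ i, u i < 10) (hu' : ∀ i, u' i < 10) (hC : ∀ j, C j < 10 ^ t) (hC' : ∀ j, C' j < 10 ^ t)
    (h : ∑ i, u i * 10 ^ (t * (m + 1) + (i + 1)) + ∑ j, C j * 10 ^ (t * (j + 1)) =
      ∑ i, u' i * 10 ^ (t * (m + 1) + (i + 1)) + ∑ j, C' j * 10 ^ (t * (j + 1))) :
    u = u' ∧ C = C' := by
  have split : ∀ (u : Fin n → ℕ) (C : Fin m → ℕ),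
      ∑ i, u i * 10 ^ (t * (m + 1) + (i + 1)) + ∑ j, C j * 10 ^ (t * (j + 1)) =
        10 ^ t * (∑ j, C j * (10 ^ t) ^ (j : ℕ) +
          (10 ^ t) ^ m * (10 * ∑ i, u i * 10 ^ (i : ℕ))) := by
    intro u C
    simp only [mul_sum, mul_add]
    rw [add_comm]
    congr 1 <;> refine sum_congr rfl fun _ _ ↦ by ring
  rw [split, split] at h
  obtain ⟨hlow, hhigh⟩ := eq_and_eq_of_add_mul_eq (sum_mul_pow_lt hC) (sum_mul_pow_lt hC')
    (Nat.eq_of_mul_eq_mul_left (by positivity) h)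
  exact ⟨sum_mul_pow_injective hu hu' (Nat.eq_of_mul_eq_mul_left (by norm_num) hhigh),
    sum_mul_pow_injective hC hC' hlow⟩

variable {n m r : ℕ}

abbrev Item (n m r : ℕ) := (Fin n ⊕ Fin n) ⊕ (Fin m × Fin r)

def varCoeff (i : Fin n) : Item n m r → ℕ
  | .inl (.inl i') | .inl (.inr i') => if i' = i then 1 else 0
  | .inr _ => 0

def clauseCoeff (pos neg : Fin m → Finset (Fin n)) (j : Fin m) : Item n m r → ℕ
  | .inl (.inl i) => if i ∈ pos j then 1 else 0
  | .inl (.inr i) => if i ∈ neg j then 1 else 0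
  | .inr (j', s) => if j' = j then 2 ^ (s : ℕ) else 0

def weight (pos neg : Fin m → Finset (Fin n)) (t : ℕ) (x : Item n m r) : ℕ :=
  ∑ i, varCoeff i x * 10 ^ (t * (m + 1) + (i + 1)) +
    ∑ j, clauseCoeff pos neg j x * 10 ^ (t * (j + 1))

def target (n m r t : ℕ) : ℕ :=
  ∑ i : Fin n, 10 ^ (t * (m + 1) + (i + 1)) + 2 ^ r * ∑ j : Fin m, 10 ^ (t * (j + 1))

def encode (α : Fin n → Bool) (T : Fin m → Finset (Fin r)) : Finset (Item n m r) :=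
  ((univ.filter (α · = true)).disjSum (univ.filter (α · = false))).disjSum
    (univ.filter fun p ↦ p.2 ∈ T p.1)

def numTrueLiterals (pos neg : Fin m → Finset (Fin n)) (α : Fin n → Bool) (j : Fin m) : ℕ :=
  #{i ∈ pos j | α i = true} + #{i ∈ neg j | α i = false}

section
variable (pos neg : Fin m → Finset (Fin n)) (t : ℕ)

lemma weight_inl_inl (i : Fin n) : weight (r := r) pos neg t (.inl (.inl i)) =
    10 ^ (t * (m + 1) + (i + 1)) + ∑ j with i ∈ pos j, 10 ^ (t * (j + 1)) := by
  simp [weight, varCoeff, clauseCoeff, sum_filter]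

lemma weight_inl_inr (i : Fin n) : weight (r := r) pos neg t (.inl (.inr i)) =
    10 ^ (t * (m + 1) + (i + 1)) + ∑ j with i ∈ neg j, 10 ^ (t * (j + 1)) := by
  simp [weight, varCoeff, clauseCoeff, sum_filter]

lemma weight_inr (j : Fin m) (s : Fin r) :
    weight pos neg t (.inr (j, s)) = 2 ^ (s : ℕ) * 10 ^ (t * (j + 1)) := by
  simp [weight, varCoeff, clauseCoeff]

lemma sum_weight (S : Finset (Item n m r)) : ∑ x ∈ S, weight pos neg t x =
    ∑ i, (∑ x ∈ S, varCoeff i x) * 10 ^ (t * (m + 1) + (i + 1)) +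
      ∑ j, (∑ x ∈ S, clauseCoeff pos neg j x) * 10 ^ (t * (j + 1)) := by
  simp only [weight, sum_add_distrib, sum_mul]
  rw [sum_comm, sum_comm (s := S)]

lemma sum_varCoeff (S : Finset (Item n m r)) (i : Fin n) : ∑ x ∈ S, varCoeff i x =
    (if .inl (.inl i) ∈ S then 1 else 0) + (if .inl (.inr i) ∈ S then 1 else 0) := by
  rw [← Fintype.sum_ite_mem]
  simp only [Fintype.sum_sum_type, varCoeff, ite_self, sum_const_zero, add_zero]
  congr 1 <;> rw [Fintype.sum_eq_single i fun _ h ↦ by simp [h]] <;> simp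

lemma sum_clauseCoeff_lt (hdisj : ∀ j, Disjoint (pos j) (neg j)) (S : Finset (Item n m r))
    (j : Fin m) : ∑ x ∈ S, clauseCoeff pos neg j x < n + 2 ^ r := by
  calc ∑ x ∈ S, clauseCoeff pos neg j x ≤ ∑ x, clauseCoeff pos neg j x :=
        sum_le_univ_sum_of_nonneg fun _ ↦ Nat.zero_le _
    _ = #(pos j) + #(neg j) + ∑ s : Fin r, 2 ^ (s : ℕ) := by
        simp [Fintype.sum_sum_type, Fintype.sum_prod_type, clauseCoeff]
    _ < n + 2 ^ r := by
        have := card_add_card_le_card_univ (hdisj j)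
        rw [Fintype.card_fin] at this
        have := sum_two_pow_lt (univ : Finset (Fin r))
        omega

lemma sum_varCoeff_encode (α : Fin n → Bool) (T : Fin m → Finset (Fin r)) (i : Fin n) :
    ∑ x ∈ encode α T, varCoeff i x = 1 := by
  cases h : α i <;> simp [encode, varCoeff, h]

lemma sum_clauseCoeff_encode (α : Fin n → Bool) (T : Fin m → Finset (Fin r)) (j : Fin m) :
    ∑ x ∈ encode α T, clauseCoeff pos neg j x =
      numTrueLiterals pos neg α j + ∑ s ∈ T j, 2 ^ (s : ℕ) := by
  simp [encode, clauseCoeff, numTrueLiterals, sum_filter, Fintype.sum_prod_type, filter_inter]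

lemma numTrueLiterals_le (hdisj : ∀ j, Disjoint (pos j) (neg j)) (α : Fin n → Bool) (j : Fin m) :
    numTrueLiterals pos neg α j ≤ n :=
  (add_le_add (card_filter_le _ _) (card_filter_le _ _)).trans
    ((card_add_card_le_card_univ (hdisj j)).trans_eq (Fintype.card_fin n))

lemma numTrueLiterals_pos_iff (α : Fin n → Bool) (j : Fin m) :
    0 < numTrueLiterals pos neg α j ↔ (∃ i ∈ pos j, α i = true) ∨ (∃ i ∈ neg j, α i = false) := by
  simp [numTrueLiterals, card_pos, filter_nonempty_iff]

end

def assignmentOf (S : Finset (Item n m r)) (i : Fin n) : Bool :=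
  decide (.inl (.inl i) ∈ S)

def bitsOf (S : Finset (Item n m r)) (j : Fin m) : Finset (Fin r) :=
  univ.filter fun s ↦ .inr (j, s) ∈ S

lemma assignmentOf_encode (α : Fin n → Bool) (T : Fin m → Finset (Fin r)) :
    assignmentOf (encode α T) = α := by
  funext i; simp [assignmentOf, encode]

lemma encode_assignmentOf_bitsOf {S : Finset (Item n m r)}
    (hS : ∀ i, ∑ x ∈ S, varCoeff i x = 1) : encode (assignmentOf S) (bitsOf S) = S := by
  ext ((i | i) | ⟨j, s⟩)
  · simp [encode, assignmentOf]
  · have := hS i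
    rw [sum_varCoeff] at this
    by_cases h : Sum.inl (Sum.inl i) ∈ S <;> by_cases h' : Sum.inl (Sum.inr i) ∈ S <;>
      simp_all [encode, assignmentOf]
  · simp [encode, bitsOf]

section
variable {pos neg : Fin m → Finset (Fin n)} {t : ℕ}

lemma sum_weight_eq_target_iff (hdisj : ∀ j, Disjoint (pos j) (neg j)) (hnr : n ≤ 2 ^ r)
    (ht : 2 ^ (r + 1) < 10 ^ t) (S : Finset (Item n m r)) :
    ∑ x ∈ S, weight pos neg t x = target n m r t ↔
      (∀ i, ∑ x ∈ S, varCoeff i x = 1) ∧ ∀ j, ∑ x ∈ S, clauseCoeff pos neg j x = 2 ^ r := by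
  have htarget : target n m r t = ∑ i : Fin n, 1 * 10 ^ (t * (m + 1) + (i + 1)) +
      ∑ j : Fin m, 2 ^ r * 10 ^ (t * (j + 1)) := by
    simp [target, mul_sum]
  have h2r : 2 ^ r + 2 ^ r < 10 ^ t := by rwa [pow_succ, mul_two] at ht
  rw [sum_weight, htarget]
  constructor
  · intro h
    obtain ⟨hu, hC⟩ := eq_of_sum_digits_eq
      (fun i ↦ by rw [sum_varCoeff]; split_ifs <;> omega) (fun _ ↦ by norm_num)
      (fun j ↦ by have := sum_clauseCoeff_lt pos neg hdisj S j; omega) (fun _ ↦ by omega) h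
    exact ⟨congrFun hu, congrFun hC⟩
  · rintro ⟨hu, hC⟩
    simp [hu, hC]

lemma sum_weight_eq_target_iff_exists_encode (hdisj : ∀ j, Disjoint (pos j) (neg j))
    (hnr : n ≤ 2 ^ r) (ht : 2 ^ (r + 1) < 10 ^ t) (S : Finset (Item n m r)) :
    ∑ x ∈ S, weight pos neg t x = target n m r t ↔
      ∃ α T, encode α T = S ∧ ∀ j, numTrueLiterals pos neg α j + ∑ s ∈ T j, 2 ^ (s : ℕ) = 2 ^ r := by
  rw [sum_weight_eq_target_iff hdisj hnr ht]
  constructor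
  · rintro ⟨hu, hC⟩
    refine ⟨_, _, encode_assignmentOf_bitsOf hu, fun j ↦ ?_⟩
    rw [← sum_clauseCoeff_encode, encode_assignmentOf_bitsOf hu, hC]
  · rintro ⟨α, T, rfl, hC⟩
    exact ⟨sum_varCoeff_encode α T, fun j ↦ (sum_clauseCoeff_encode pos neg α T j).trans (hC j)⟩

theorem card_solutions_eq_card_satisfying (hdisj : ∀ j, Disjoint (pos j) (neg j))
    (hnr : n ≤ 2 ^ r) (ht : 2 ^ (r + 1) < 10 ^ t) :
    Nat.card {S : Finset (Item n m r) // ∑ x ∈ S, weight pos neg t x = target n m r t} =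
      Nat.card {α : Fin n → Bool //
        ∀ j, (∃ i ∈ pos j, α i = true) ∨ (∃ i ∈ neg j, α i = false)} := by
  simp_rw [sum_weight_eq_target_iff_exists_encode hdisj hnr ht, ← numTrueLiterals_pos_iff]
  have assignmentOf_satisfies : ∀ S : {S : Finset (Item n m r) // ∃ α T, encode α T = S ∧
      ∀ j, numTrueLiterals pos neg α j + ∑ s ∈ T j, 2 ^ (s : ℕ) = 2 ^ r},
      ∀ j, 0 < numTrueLiterals pos neg (assignmentOf S.1) j := by
    rintro ⟨_, α, T, rfl, hC⟩ j
    have := sum_two_pow_lt (T j)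
    have := hC j
    rw [assignmentOf_encode]
    omega
  refine Nat.card_eq_of_bijective (fun S ↦ ⟨_, assignmentOf_satisfies S⟩) ⟨?_, ?_⟩
  · rintro ⟨_, α, T, rfl, hC⟩ ⟨_, α', T', rfl, hC'⟩ h
    obtain rfl : α = α' := by simpa [assignmentOf_encode] using h
    obtain rfl : T = T' := funext fun j ↦ sum_two_pow_injective <|
      show ∑ s ∈ T j, 2 ^ (s : ℕ) = ∑ s ∈ T' j, 2 ^ (s : ℕ) by have := hC j; have := hC' j; omega
    rfl
  · rintro ⟨α, hα⟩
    have hk : ∀ j, 2 ^ r - numTrueLiterals pos neg α j < 2 ^ r := fun j ↦ by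
      have := hα j; have := Nat.two_pow_pos r; omega
    choose T hT using fun j ↦ exists_sum_two_pow_eq (hk j)
    refine ⟨⟨encode α T, α, T, rfl, fun j ↦ ?_⟩, Subtype.ext (assignmentOf_encode α T)⟩
    have := numTrueLiterals_le pos neg hdisj α j
    have := hT j
    omega

end

end SubsetSumReduction

open SubsetSumReduction in
theorem num_subset_sum_solutions_eq_num_satisfying_assignments_general
    (n m t : ℕ)
    (pos neg : Fin m → Finset (Fin n)) (hdisj : ∀ j, pos j ∩ neg j = ∅)
    (r' : ℕ) (hr' : r' = Nat.clog 2 n) (ht10 : 2 ^ (r' + 1) < 10 ^ t)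
    (w : (Fin n ⊕ Fin n) ⊕ (Fin m × Fin r') → ℕ)
    (hwa : ∀ i : Fin n, w (Sum.inl (Sum.inl i)) =
        10 ^ (t * (m + 1) + ((i : ℕ) + 1)) +
          ∑ j ∈ Finset.univ.filter fun j : Fin m => i ∈ pos j, 10 ^ (t * ((j : ℕ) + 1)))
    (hwb : ∀ i : Fin n, w (Sum.inl (Sum.inr i)) =
        10 ^ (t * (m + 1) + ((i : ℕ) + 1)) +
          ∑ j ∈ Finset.univ.filter fun j : Fin m => i ∈ neg j, 10 ^ (t * ((j : ℕ) + 1)))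
    (hwc : ∀ j : Fin m, ∀ s : Fin r', w (Sum.inr (j, s)) =
        2 ^ (s : ℕ) * 10 ^ (t * ((j : ℕ) + 1)))
    (q' : ℕ)
    (hq' : q' = (∑ i : Fin n, 10 ^ (t * (m + 1) + ((i : ℕ) + 1))) +
        2 ^ r' * ∑ j : Fin m, 10 ^ (t * ((j : ℕ) + 1))) :
    Nat.card {S : Finset ((Fin n ⊕ Fin n) ⊕ (Fin m × Fin r')) // ∑ x ∈ S, w x = q'} =
      Nat.card {α : Fin n → Bool //
        ∀ j : Fin m, (∃ i ∈ pos j, α i = true) ∨ (∃ i ∈ neg j, α i = false)} := by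
  have hw : w = weight pos neg t := by
    funext x
    rcases x with (i | i) | ⟨j, s⟩
    · rw [hwa, weight_inl_inl]
    · rw [hwb, weight_inl_inr]
    · rw [hwc, weight_inr]
  subst hw hq'
  exact card_solutions_eq_card_satisfying (fun j ↦ disjoint_iff_inter_eq_empty.2 (hdisj j))
    (hr' ▸ Nat.le_pow_clog one_lt_two n) ht10

theorem num_subset_sum_solutions_eq_num_satisfying_assignments
    (n m t : ℕ) (hn : 2 ≤ n) (hm : 1 ≤ m) (ht : 1 ≤ t)
    (pos neg : Fin m → Finset (Fin n)) (hdisj : ∀ j, pos j ∩ neg j = ∅)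
    (r' : ℕ) (hr' : r' = Nat.clog 2 n) (ht10 : 2 ^ (r' + 1) < 10 ^ t)
    (w : (Fin n ⊕ Fin n) ⊕ (Fin m × Fin r') → ℕ)
    (hwa : ∀ i : Fin n, w (Sum.inl (Sum.inl i)) =
        10 ^ (t * (m + 1) + ((i : ℕ) + 1)) +
          ∑ j ∈ Finset.univ.filter fun j : Fin m => i ∈ pos j, 10 ^ (t * ((j : ℕ) + 1)))
    (hwb : ∀ i : Fin n, w (Sum.inl (Sum.inr i)) =
        10 ^ (t * (m + 1) + ((i : ℕ) + 1)) +
          ∑ j ∈ Finset.univ.filter fun j : Fin m => i ∈ neg j, 10 ^ (t * ((j : ℕ) + 1)))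
    (hwc : ∀ j : Fin m, ∀ s : Fin r', w (Sum.inr (j, s)) =
        2 ^ (s : ℕ) * 10 ^ (t * ((j : ℕ) + 1)))
    (q' : ℕ)
    (hq' : q' = (∑ i : Fin n, 10 ^ (t * (m + 1) + ((i : ℕ) + 1))) +
        2 ^ r' * ∑ j : Fin m, 10 ^ (t * ((j : ℕ) + 1))) :
    Nat.card {S : Finset ((Fin n ⊕ Fin n) ⊕ (Fin m × Fin r')) // ∑ x ∈ S, w x = q'} =
      Nat.card {α : Fin n → Bool //
        ∀ j : Fin m, (∃ i ∈ pos j, α i = true) ∨ (∃ i ∈ neg j, α i = false)} :=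
  num_subset_sum_solutions_eq_num_satisfying_assignments_general n m t pos neg hdisj r' hr' ht10 w
    hwa hwb hwc q' hq'
end

section
/- Let n ≥ 2 and m ≥ 1 be natural numbers, let pos, neg : Fin m → Finset (Fin n) satisfy pos j ∩ neg j = ∅ for every j, set r' = ⌈log₂ n⌉, and let t ≥ 1 be a natural number with 10^t > 2^{r'+1}. Index weights by ι = (Fin n ⊕ Fin n) ⊕ (Fin m × Fin r') and define w : ι → ℕ by: a_i = w(inl(inl i)) = 10^{t(m+1)+(i+1)} + Σ_{j : i ∈ pos j} 10^{t(j+1)}; b_i = w(inl(inr i)) = 10^{t(m+1)+(i+1)} + Σ_{j : i ∈ neg j} 10^{t(j+1)}; and w(inr(j,s)) = 2^s · 10^{t(j+1)}. Define q' = Σ_{i ∈ Fin n} 10^{t(m+1)+(i+1)} + 2^{r'} · Σ_{j ∈ Fin m} 10^{t(j+1)}. Then every finite set S ⊆ ι with Σ_{x ∈ S} w(x) = q' contains, for each i ∈ Fin n, exactly one of the two indices inl(inl i) and inl(inr i); that is, it selects exactly one of a_i and b_i for every variable i. -/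
/-!
Write every weight as `N * high + low` with `N = 10 ^ (t * (m + 1) + 1)`, where `high` is `10 ^ i`
for `a_i` and `b_i` and `0` for the `c`-weights. A variable occurs in each clause with at most one
sign and the `c`-weights of a clause add up to less than `2 ^ r'`, so all the `low` parts together
stay below `(n + 2 ^ r') * ∑ j, 10 ^ (t * (j + 1)) < N`: no carry reaches the variable digits.
Dividing `∑ x ∈ S, w x = q'` by `N` leaves `∑ i, #(S ∩ {a_i, b_i}) * 10 ^ i = ∑ i, 10 ^ i`, and
since these counts are base-10 digits, each of them is `1`.
-/

open Finset

theorem sum_fin_succ_mul_pow {b n : ℕ} (d : Fin (n + 1) → ℕ) :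
    ∑ i, d i * b ^ (i : ℕ) = d 0 + b * ∑ i : Fin n, d i.succ * b ^ (i : ℕ) := by
  rw [Fin.sum_univ_succ, mul_sum]
  simp only [Fin.val_zero, pow_zero, mul_one, Fin.val_succ, pow_succ]
  exact congrArg _ (sum_congr rfl fun i _ => by ring)

theorem sum_mul_pow_lt_pow {b : ℕ} : ∀ {n : ℕ} (d : Fin n → ℕ), (∀ i, d i < b) →
    ∑ i, d i * b ^ (i : ℕ) < b ^ n
  | 0, _, _ => by simp
  | n + 1, d, hd => by
    have htail := sum_mul_pow_lt_pow (fun i => d i.succ) fun i => hd i.succ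
    rw [sum_fin_succ_mul_pow, pow_succ']
    nlinarith [hd 0]

theorem sum_mul_pow_injective_s15 {b : ℕ} : ∀ {n : ℕ} {d e : Fin n → ℕ}, (∀ i, d i < b) →
    (∀ i, e i < b) → ∑ i, d i * b ^ (i : ℕ) = ∑ i, e i * b ^ (i : ℕ) → d = e
  | 0, _, _, _, _, _ => funext fun i => i.elim0
  | n + 1, d, e, hd, he, h => by
    rw [sum_fin_succ_mul_pow, sum_fin_succ_mul_pow] at h
    have hb : 0 < b := Nat.zero_lt_of_lt (hd 0)
    have head : d 0 = e 0 := by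
      simpa [Nat.add_mul_mod_self_left, Nat.mod_eq_of_lt (hd 0), Nat.mod_eq_of_lt (he 0)]
        using congrArg (· % b) h
    have tail := sum_mul_pow_injective_s15 (fun i => hd i.succ) (fun i => he i.succ) <| by
      simpa [Nat.add_mul_div_left, Nat.div_eq_of_lt (hd 0), Nat.div_eq_of_lt (he 0), hb]
        using congrArg (· / b) h
    funext i
    exact Fin.cases head (congrFun tail) i

theorem mul_sum_pow_succ_lt {b c : ℕ} (hc : c < b) (m : ℕ) :
    c * ∑ j : Fin m, b ^ ((j : ℕ) + 1) < b ^ (m + 1) := by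
  have h := sum_mul_pow_lt_pow (b := b) (fun _ : Fin m => c) fun _ => hc
  calc c * ∑ j : Fin m, b ^ ((j : ℕ) + 1) = b * ∑ j : Fin m, c * b ^ (j : ℕ) := by
        simp only [pow_succ', mul_sum]; ring_nf
    _ < b ^ (m + 1) := by rw [pow_succ']; exact Nat.mul_lt_mul_of_pos_left h (by omega)

theorem Nat.mul_add_div_of_lt {N r : ℕ} (a : ℕ) (h : r < N) : (N * a + r) / N = a := by
  rw [Nat.mul_add_div (Nat.zero_lt_of_lt h), Nat.div_eq_of_lt h, add_zero]

theorem sum_mul_add_div_of_lt {ι : Type*} {s : Finset ι} {N : ℕ} (high low : ι → ℕ)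
    (h : ∑ x ∈ s, low x < N) : (∑ x ∈ s, (N * high x + low x)) / N = ∑ x ∈ s, high x := by
  rw [sum_add_distrib, ← mul_sum, Nat.mul_add_div_of_lt _ h]

theorem sum_filter_add_sum_filter_le {ι M : Type*} [AddCommMonoid M] [PartialOrder M]
    [CanonicallyOrderedAdd M] (s : Finset ι) {p q : ι → Prop} [DecidablePred p] [DecidablePred q]
    (hpq : ∀ x, p x → ¬ q x) (f : ι → M) :
    ∑ x ∈ s with p x, f x + ∑ x ∈ s with q x, f x ≤ ∑ x ∈ s, f x := by
  rw [← sum_filter_add_sum_filter_not s p f]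
  refine add_le_add_right (sum_le_sum_of_subset fun x => ?_) _
  simp only [mem_filter]
  exact fun ⟨hs, hq⟩ => ⟨hs, fun hp => hpq x hp hq⟩

section Pairs

variable {α β : Type*} [DecidableEq α] [DecidableEq β]

def pairCount (S : Finset ((α ⊕ α) ⊕ β)) (i : α) : ℕ :=
  (if .inl (.inl i) ∈ S then 1 else 0) + (if .inl (.inr i) ∈ S then 1 else 0)

theorem pairCount_le_two (S : Finset ((α ⊕ α) ⊕ β)) (i : α) : pairCount S i ≤ 2 := by
  unfold pairCount; split_ifs <;> simp

theorem pairCount_eq_one_iff {S : Finset ((α ⊕ α) ⊕ β)} {i : α} :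
    pairCount S i = 1 ↔ (.inl (.inl i) ∈ S ∧ .inl (.inr i) ∉ S) ∨
      (.inl (.inl i) ∉ S ∧ .inl (.inr i) ∈ S) := by
  unfold pairCount; split_ifs <;> simp_all

theorem sum_elim_elim_zero [Fintype α] [Fintype β] (S : Finset ((α ⊕ α) ⊕ β)) (h : α → ℕ) :
    ∑ x ∈ S, Sum.elim (Sum.elim h h) 0 x = ∑ i, pairCount S i * h i := by
  rw [← sum_ite_mem_eq, Fintype.sum_sum_type, Fintype.sum_sum_type, ← sum_add_distrib]
  simp [pairCount, add_mul]

end Pairs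

theorem mul_sum_pow_mul_succ_lt {b c t : ℕ} (hc : c < b ^ t) (m : ℕ) :
    c * ∑ j : Fin m, b ^ (t * ((j : ℕ) + 1)) < b ^ (t * (m + 1)) := by
  simpa only [pow_mul] using mul_sum_pow_succ_lt hc m

/-- The clause blocks of the weights `a_i`, `b_i`, `c_{j,s}`; what remains of `a_i` and `b_i` is
`10 ^ (t * (m + 1) + 1) * 10 ^ i`. -/
def clauseWeight {n m : ℕ} (t : ℕ) (pos neg : Fin m → Finset (Fin n)) (r' : ℕ) :
    (Fin n ⊕ Fin n) ⊕ (Fin m × Fin r') → ℕ :=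
  Sum.elim (Sum.elim (fun i => ∑ j with i ∈ pos j, 10 ^ (t * ((j : ℕ) + 1)))
    (fun i => ∑ j with i ∈ neg j, 10 ^ (t * ((j : ℕ) + 1))))
    (fun p => 2 ^ (p.2 : ℕ) * 10 ^ (t * ((p.1 : ℕ) + 1)))

theorem sum_clauseWeight_lt {n m t r' : ℕ} (pos neg : Fin m → Finset (Fin n))
    (hdisj : ∀ j, pos j ∩ neg j = ∅) (hn : n ≤ 2 ^ r') (ht10 : 2 ^ (r' + 1) < 10 ^ t) :
    ∑ x, clauseWeight t pos neg r' x < 10 ^ (t * (m + 1)) := by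
  set C := ∑ j : Fin m, 10 ^ (t * ((j : ℕ) + 1))
  have hliteral (i : Fin n) :
      ∑ j with i ∈ pos j, 10 ^ (t * ((j : ℕ) + 1)) + ∑ j with i ∈ neg j, 10 ^ (t * ((j : ℕ) + 1))
        ≤ C :=
    sum_filter_add_sum_filter_le _
      (fun j hp hq => by simpa [hdisj j] using mem_inter.2 ⟨hp, hq⟩) _
  have hpow : ∑ s : Fin r', 2 ^ (s : ℕ) < 2 ^ r' := by
    simpa using sum_mul_pow_lt_pow (b := 2) (fun _ : Fin r' => 1) fun _ => one_lt_two
  calc _ = ∑ i : Fin n, (∑ j with i ∈ pos j, 10 ^ (t * ((j : ℕ) + 1)) +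
          ∑ j with i ∈ neg j, 10 ^ (t * ((j : ℕ) + 1))) + (∑ s : Fin r', 2 ^ (s : ℕ)) * C := by
        rw [clauseWeight, Fintype.sum_sum_type, Fintype.sum_sum_type, sum_add_distrib,
          sum_mul_sum, Fintype.sum_prod_type_right]
        rfl
    _ ≤ (n + ∑ s : Fin r', 2 ^ (s : ℕ)) * C := by
        rw [add_mul]
        gcongr
        simpa using sum_le_sum fun i (_ : i ∈ univ) => hliteral i
    _ < 10 ^ (t * (m + 1)) := mul_sum_pow_mul_succ_lt (by rw [pow_succ] at ht10; omega) m

theorem subset_sum_solution_selects_one_of_each_pair_general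
    (n m t : ℕ)
    (pos neg : Fin m → Finset (Fin n)) (hdisj : ∀ j, pos j ∩ neg j = ∅)
    (r' : ℕ) (hr' : r' = Nat.clog 2 n) (ht10 : 2 ^ (r' + 1) < 10 ^ t)
    (w : (Fin n ⊕ Fin n) ⊕ (Fin m × Fin r') → ℕ)
    (hwa : ∀ i : Fin n, w (Sum.inl (Sum.inl i)) =
        10 ^ (t * (m + 1) + ((i : ℕ) + 1)) +
          ∑ j ∈ Finset.univ.filter fun j : Fin m => i ∈ pos j, 10 ^ (t * ((j : ℕ) + 1)))
    (hwb : ∀ i : Fin n, w (Sum.inl (Sum.inr i)) =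
        10 ^ (t * (m + 1) + ((i : ℕ) + 1)) +
          ∑ j ∈ Finset.univ.filter fun j : Fin m => i ∈ neg j, 10 ^ (t * ((j : ℕ) + 1)))
    (hwc : ∀ j : Fin m, ∀ s : Fin r', w (Sum.inr (j, s)) =
        2 ^ (s : ℕ) * 10 ^ (t * ((j : ℕ) + 1)))
    (q' : ℕ)
    (hq' : q' = (∑ i : Fin n, 10 ^ (t * (m + 1) + ((i : ℕ) + 1))) +
        2 ^ r' * ∑ j : Fin m, 10 ^ (t * ((j : ℕ) + 1))) :
    ∀ S : Finset ((Fin n ⊕ Fin n) ⊕ (Fin m × Fin r')), (∑ x ∈ S, w x = q') →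
      ∀ i : Fin n,
        (Sum.inl (Sum.inl i) ∈ S ∧ Sum.inl (Sum.inr i) ∉ S) ∨
        (Sum.inl (Sum.inl i) ∉ S ∧ Sum.inl (Sum.inr i) ∈ S) := by
  intro S hS i
  set N := 10 ^ (t * (m + 1) + 1)
  set high := Sum.elim (Sum.elim (fun i : Fin n => 10 ^ (i : ℕ)) fun i : Fin n => 10 ^ (i : ℕ))
    (0 : Fin m × Fin r' → ℕ)
  set low := clauseWeight t pos neg r'
  have hNlow : 10 ^ (t * (m + 1)) < N := Nat.pow_lt_pow_right (by norm_num) (by omega)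
  have hlow : ∑ x ∈ S, low x < N :=
    ((sum_le_sum_of_subset (subset_univ S)).trans_lt
      (sum_clauseWeight_lt pos neg hdisj (hr' ▸ Nat.le_pow_clog one_lt_two n) ht10)).trans hNlow
  have hpow (i : Fin n) : 10 ^ (t * (m + 1) + ((i : ℕ) + 1)) = N * 10 ^ (i : ℕ) := by
    rw [← pow_add, add_assoc, add_comm 1]
  have hw (x) : w x = N * high x + low x := by
    rcases x with (i | i) | ⟨j, s⟩ <;> simp [hwa, hwb, hwc, high, low, clauseWeight, hpow]
  have hq : q' = N * ∑ i : Fin n, 10 ^ (i : ℕ) +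
      2 ^ r' * ∑ j : Fin m, 10 ^ (t * ((j : ℕ) + 1)) := by
    simp [hq', hpow, mul_sum]
  have hqlo : 2 ^ r' * ∑ j : Fin m, 10 ^ (t * ((j : ℕ) + 1)) < N :=
    (mul_sum_pow_mul_succ_lt (by rw [pow_succ] at ht10; omega) m).trans hNlow
  have hdigits : ∑ i, pairCount S i * 10 ^ (i : ℕ) = ∑ i : Fin n, 1 * 10 ^ (i : ℕ) := by
    calc ∑ i, pairCount S i * 10 ^ (i : ℕ) = ∑ x ∈ S, high x := (sum_elim_elim_zero S _).symm
      _ = (∑ x ∈ S, (N * high x + low x)) / N := (sum_mul_add_div_of_lt high low hlow).symm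
      _ = q' / N := by rw [← hS, sum_congr rfl fun x _ => (hw x).symm]
      _ = ∑ i : Fin n, 1 * 10 ^ (i : ℕ) := by rw [hq, Nat.mul_add_div_of_lt _ hqlo]; simp
  have hone := sum_mul_pow_injective_s15 (fun i => (pairCount_le_two S i).trans_lt (by norm_num))
    (fun _ => by norm_num) hdigits
  exact pairCount_eq_one_iff.1 (congrFun hone i)

theorem subset_sum_solution_selects_one_of_each_pair
    (n m t : ℕ) (hn : 2 ≤ n) (hm : 1 ≤ m) (ht : 1 ≤ t)
    (pos neg : Fin m → Finset (Fin n)) (hdisj : ∀ j, pos j ∩ neg j = ∅)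
    (r' : ℕ) (hr' : r' = Nat.clog 2 n) (ht10 : 2 ^ (r' + 1) < 10 ^ t)
    (w : (Fin n ⊕ Fin n) ⊕ (Fin m × Fin r') → ℕ)
    (hwa : ∀ i : Fin n, w (Sum.inl (Sum.inl i)) =
        10 ^ (t * (m + 1) + ((i : ℕ) + 1)) +
          ∑ j ∈ Finset.univ.filter fun j : Fin m => i ∈ pos j, 10 ^ (t * ((j : ℕ) + 1)))
    (hwb : ∀ i : Fin n, w (Sum.inl (Sum.inr i)) =
        10 ^ (t * (m + 1) + ((i : ℕ) + 1)) +
          ∑ j ∈ Finset.univ.filter fun j : Fin m => i ∈ neg j, 10 ^ (t * ((j : ℕ) + 1)))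
    (hwc : ∀ j : Fin m, ∀ s : Fin r', w (Sum.inr (j, s)) =
        2 ^ (s : ℕ) * 10 ^ (t * ((j : ℕ) + 1)))
    (q' : ℕ)
    (hq' : q' = (∑ i : Fin n, 10 ^ (t * (m + 1) + ((i : ℕ) + 1))) +
        2 ^ r' * ∑ j : Fin m, 10 ^ (t * ((j : ℕ) + 1))) :
    ∀ S : Finset ((Fin n ⊕ Fin n) ⊕ (Fin m × Fin r')), (∑ x ∈ S, w x = q') →
      ∀ i : Fin n,
        (Sum.inl (Sum.inl i) ∈ S ∧ Sum.inl (Sum.inr i) ∉ S) ∨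
        (Sum.inl (Sum.inl i) ∉ S ∧ Sum.inl (Sum.inr i) ∈ S) :=
  subset_sum_solution_selects_one_of_each_pair_general n m t pos neg hdisj r' hr' ht10 w hwa hwb hwc
    q' hq'
end
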